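/- Let f : ℝⁿ → ℝ be continuously differentiable with inf f > −∞, let g : ℝⁿ → ℝⁿ be continuously differentiable with Jacobian H(x) at every x, where H is L_H-Lipschitz continuous with L_H > 0, and suppose ∇f(z) = ν(z) g(z) for a continuous ν : ℝⁿ → ℝ with ν(z) ≥ L̃ > 0 for all z. Let σ ≥ L_H and let the sequences {x^k}, {s^k} satisfy for every k: H(x^k) s^k + σ ‖s^k‖ s^k = −g(x^k), ⟨g(x^k), s^k⟩ ≤ 0, and x^{k+1} = x^k + s^k. Then for any ε > 0 and K ∈ ℕ, if ‖g(x^k)‖ > ε for all 1 ≤ k ≤ K, then K ≤ 6 σ^{3/2} (f(x⁰) − inf f) / (L̃ L_H ε^{3/2}). In particular the method finds a point with ‖g(x^K)‖ ≤ ε in at most 6 σ^{3/2} (f(x⁰) − inf f) / (L̃ L_H ε^{3/2}) iterations. -/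

import Mathlib

/-!
The second-order Taylor bound `‖g (x + s) - g x - H x s‖ ≤ L_H / 2 * ‖s‖ ^ 2` controls a
regularized Newton step `s` at `x` in two ways. First, the new residual is small:
`‖g (x + s)‖ ≤ 3σ/2 ‖s‖²`. Second, along the segment `x + t s`, `t ∈ [0, 1]`, the derivative
`ν ⟪g, s⟫` of `f` stays below `L̃ σ ‖s‖³ (t²/2 - t)`, so `f` decreases by at least
`L̃ σ ‖s‖³ / 3`. As long as `‖g (x^{k+1})‖ > ε` the step is long, `‖s^k‖² ≥ 2ε / (3σ)`, hence
each of the first `K` steps decreases `f` by at least `L̃ L_H ε^{3/2} / (6 σ^{3/2})`, and the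
total decrease is at most `f x⁰ - inf f`.
-/

open scoped RealInnerProductSpace

theorem norm_sub_sub_apply_le_of_lipschitz_fderiv {E F : Type*} [NormedAddCommGroup E]
    [NormedSpace ℝ E] [NormedAddCommGroup F] [NormedSpace ℝ F]
    {g : E → F} {H : E → E →L[ℝ] F} {L : ℝ} (hg : ∀ x, HasFDerivAt g (H x) x)
    (hH : ∀ x y, ‖H x - H y‖ ≤ L * ‖x - y‖) (x s : E) :
    ‖g (x + s) - g x - H x s‖ ≤ L / 2 * ‖s‖ ^ 2 := by
  set φ : ℝ → F := fun t => g (x + t • s) - g x - t • H x s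
  have hφ : ∀ t, HasDerivAt φ (H (x + t • s) s - H x s) t := by
    intro t
    have hline : HasDerivAt (fun t : ℝ => x + t • s) s t := by
      simpa using ((hasDerivAt_id t).smul_const s).const_add x
    exact (((hg _).comp_hasDerivAt t hline).sub_const (g x)).sub
      (by simpa using (hasDerivAt_id t).smul_const (H x s))
  have hB : ∀ t, HasDerivAt (fun t : ℝ => L / 2 * ‖s‖ ^ 2 * t ^ 2) (L * ‖s‖ ^ 2 * t) t := by
    intro t
    refine ((hasDerivAt_pow 2 t).const_mul (L / 2 * ‖s‖ ^ 2)).congr_deriv ?_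
    simp only [Nat.cast_ofNat]
    ring
  have hbound : ∀ t ∈ Set.Ico (0 : ℝ) 1, ‖H (x + t • s) s - H x s‖ ≤ L * ‖s‖ ^ 2 * t := by
    rintro t ⟨ht, -⟩
    calc ‖H (x + t • s) s - H x s‖ = ‖(H (x + t • s) - H x) s‖ := rfl
      _ ≤ ‖H (x + t • s) - H x‖ * ‖s‖ := (H (x + t • s) - H x).le_opNorm s
      _ ≤ L * ‖t • s‖ * ‖s‖ := by gcongr; simpa using hH (x + t • s) x
      _ = L * ‖s‖ ^ 2 * t := by rw [norm_smul, Real.norm_of_nonneg ht]; ring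
  have := image_norm_le_of_norm_deriv_right_le_deriv_boundary
    (fun t _ => (hφ t).continuousAt.continuousWithinAt) (fun t _ => (hφ t).hasDerivWithinAt)
    (by simp [φ]) hB hbound (Set.right_mem_Icc.2 zero_le_one)
  simpa [φ] using this

theorem norm_apply_add_le_of_newton_step {E : Type*} [NormedAddCommGroup E] [NormedSpace ℝ E]
    {g : E → E} {H : E → E →L[ℝ] E} {L σ : ℝ} {x s : E} (hg : ∀ x, HasFDerivAt g (H x) x)
    (hH : ∀ x y, ‖H x - H y‖ ≤ L * ‖x - y‖) (hL : 0 ≤ L) (hσ : L ≤ σ)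
    (hstep : H x s + (σ * ‖s‖) • s = -g x) :
    ‖g (x + s)‖ ≤ 3 / 2 * σ * ‖s‖ ^ 2 := by
  have hsplit : g (x + s) = (g (x + s) - g x - H x s) - (σ * ‖s‖) • s := by
    rw [eq_sub_of_add_eq hstep]; abel
  calc ‖g (x + s)‖ = ‖(g (x + s) - g x - H x s) - (σ * ‖s‖) • s‖ := congrArg norm hsplit
    _ ≤ ‖g (x + s) - g x - H x s‖ + ‖(σ * ‖s‖) • s‖ := norm_sub_le _ _
    _ ≤ L / 2 * ‖s‖ ^ 2 + σ * ‖s‖ * ‖s‖ := by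
      gcongr
      · exact norm_sub_sub_apply_le_of_lipschitz_fderiv hg hH x s
      · rw [norm_smul, Real.norm_of_nonneg (by nlinarith [norm_nonneg s])]
    _ ≤ 3 / 2 * σ * ‖s‖ ^ 2 := by nlinarith [sq_nonneg ‖s‖]

theorem inner_apply_add_smul_le_of_newton_step {E : Type*} [NormedAddCommGroup E]
    [InnerProductSpace ℝ E] {g : E → E} {H : E → E →L[ℝ] E} {L σ : ℝ} {x s : E}
    (hg : ∀ x, HasFDerivAt g (H x) x) (hH : ∀ x y, ‖H x - H y‖ ≤ L * ‖x - y‖) (hσ : L ≤ σ)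
    (hstep : H x s + (σ * ‖s‖) • s = -g x) (hdesc : ⟪g x, s⟫ ≤ 0) {t : ℝ} (ht : t ∈ Set.Icc 0 1) :
    ⟪g (x + t • s), s⟫ ≤ σ * ‖s‖ ^ 3 * (t ^ 2 / 2 - t) := by
  obtain ⟨ht0, ht1⟩ := ht
  have hsplit : ⟪g (x + t • s), s⟫ =
      ⟪g (x + t • s) - g x - H x (t • s), s⟫ + (1 - t) * ⟪g x, s⟫ - t * σ * ‖s‖ ^ 3 := by
    have hHs : ⟪H x s, s⟫ = -⟪g x, s⟫ - σ * ‖s‖ ^ 3 := by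
      rw [eq_sub_of_add_eq hstep, inner_sub_left, inner_neg_left, real_inner_smul_left,
        real_inner_self_eq_norm_sq]
      ring
    rw [inner_sub_left, inner_sub_left, map_smul, real_inner_smul_left, hHs]
    ring
  have htaylor : ⟪g (x + t • s) - g x - H x (t • s), s⟫ ≤ L / 2 * t ^ 2 * ‖s‖ ^ 3 :=
    calc _ ≤ ‖g (x + t • s) - g x - H x (t • s)‖ * ‖s‖ := real_inner_le_norm _ _
      _ ≤ L / 2 * ‖t • s‖ ^ 2 * ‖s‖ := by
        gcongr; exact norm_sub_sub_apply_le_of_lipschitz_fderiv hg hH x (t • s)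
      _ = L / 2 * t ^ 2 * ‖s‖ ^ 3 := by rw [norm_smul, Real.norm_of_nonneg ht0]; ring
  rw [hsplit]
  nlinarith [mul_nonpos_of_nonneg_of_nonpos (sub_nonneg.2 ht1) hdesc,
    mul_nonneg (mul_nonneg (sub_nonneg.2 hσ) (sq_nonneg t)) (pow_nonneg (norm_nonneg s) 3)]

theorem le_sub_apply_add_of_newton_step {E : Type*} [NormedAddCommGroup E]
    [InnerProductSpace ℝ E] [CompleteSpace E] {f ν : E → ℝ} {g : E → E} {H : E → E →L[ℝ] E}
    {c L σ : ℝ} {x s : E} (hf : ∀ z, HasGradientAt f (ν z • g z) z) (hν : ∀ z, c ≤ ν z)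
    (hc : 0 ≤ c) (hg : ∀ x, HasFDerivAt g (H x) x) (hH : ∀ x y, ‖H x - H y‖ ≤ L * ‖x - y‖)
    (hL : 0 ≤ L) (hσ : L ≤ σ) (hstep : H x s + (σ * ‖s‖) • s = -g x) (hdesc : ⟪g x, s⟫ ≤ 0) :
    c * σ / 3 * ‖s‖ ^ 3 ≤ f x - f (x + s) := by
  set a := c * σ * ‖s‖ ^ 3
  have hφ : ∀ t : ℝ, HasDerivAt (fun t : ℝ => f (x + t • s))
      (ν (x + t • s) * ⟪g (x + t • s), s⟫) t := by
    intro t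
    have hline : HasDerivAt (fun t : ℝ => x + t • s) s t := by
      simpa using ((hasDerivAt_id t).smul_const s).const_add x
    have := (hf _).hasFDerivAt.comp_hasDerivAt t hline
    rwa [InnerProductSpace.toDual_apply_apply, real_inner_smul_left] at this
  have hB : ∀ t : ℝ, HasDerivAt (fun t : ℝ => f x + a * (t ^ 3 / 6 - t ^ 2 / 2))
      (a * (t ^ 2 / 2 - t)) t := by
    intro t
    refine ((((hasDerivAt_pow 3 t).div_const 6).sub ((hasDerivAt_pow 2 t).div_const 2)).const_mul
      a |>.const_add (f x)).congr_deriv ?_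
    simp only [Nat.cast_ofNat]
    ring
  have hbound : ∀ t ∈ Set.Ico (0 : ℝ) 1, ν (x + t • s) * ⟪g (x + t • s), s⟫ ≤ a * (t ^ 2 / 2 - t) := by
    rintro t ⟨ht0, ht1⟩
    have hinner := inner_apply_add_smul_le_of_newton_step hg hH hσ hstep hdesc ⟨ht0, ht1.le⟩
    have hneg : ⟪g (x + t • s), s⟫ ≤ 0 := hinner.trans <|
      mul_nonpos_of_nonneg_of_nonpos (by have := hL.trans hσ; positivity) (by nlinarith)
    calc ν (x + t • s) * ⟪g (x + t • s), s⟫ ≤ c * ⟪g (x + t • s), s⟫ :=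
          mul_le_mul_of_nonpos_right (hν _) hneg
      _ ≤ c * (σ * ‖s‖ ^ 3 * (t ^ 2 / 2 - t)) := mul_le_mul_of_nonneg_left hinner hc
      _ = a * (t ^ 2 / 2 - t) := by ring
  have := image_le_of_deriv_right_le_deriv_boundary
    (fun t _ => (hφ t).continuousAt.continuousWithinAt) (fun t _ => (hφ t).hasDerivWithinAt)
    (by simp) (fun t _ => (hB t).continuousAt.continuousWithinAt)
    (fun t _ => (hB t).hasDerivWithinAt) hbound (Set.right_mem_Icc.2 zero_le_one)
  simp only [one_smul] at this
  linarith

theorem mul_rpow_three_halves_div_le {L σ ε r : ℝ} (hσ0 : 0 < σ) (hσ : L ≤ σ) (hε : 0 ≤ ε)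
    (hr : 0 ≤ r) (h : ε ≤ 3 / 2 * σ * r ^ 2) :
    L * ε ^ ((3 : ℝ) / 2) / (6 * σ ^ ((3 : ℝ) / 2)) ≤ σ / 3 * r ^ 3 := by
  have hsq : ∀ a : ℝ, 0 ≤ a → (a ^ ((3 : ℝ) / 2)) ^ 2 = a ^ 3 := by
    intro a ha
    rw [← Real.rpow_mul_natCast ha]
    norm_num
  -- compare squares; the constant works because `(3/2)³ ≤ 2²`
  have hε' : ε ^ ((3 : ℝ) / 2) ≤ 2 * σ ^ ((3 : ℝ) / 2) * r ^ 3 := by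
    refine (pow_le_pow_iff_left₀ (by positivity) (by positivity) two_ne_zero).1 ?_
    rw [mul_pow, mul_pow, hsq ε hε, hsq σ hσ0.le, ← pow_mul]
    calc ε ^ 3 ≤ (3 / 2 * σ * r ^ 2) ^ 3 := pow_le_pow_left₀ hε h 3
      _ ≤ 2 ^ 2 * σ ^ 3 * r ^ (3 * 2) := by
        have : 0 ≤ σ ^ 3 * r ^ 6 := by positivity
        nlinarith
  rw [div_le_iff₀ (by positivity)]
  calc L * ε ^ ((3 : ℝ) / 2) ≤ σ * ε ^ ((3 : ℝ) / 2) := by gcongr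
    _ ≤ σ * (2 * σ ^ ((3 : ℝ) / 2) * r ^ 3) := by gcongr
    _ = σ / 3 * r ^ 3 * (6 * σ ^ ((3 : ℝ) / 2)) := by ring

theorem natCast_mul_le_sub_of_le_sub_succ {u : ℕ → ℝ} {c : ℝ} {K : ℕ}
    (h : ∀ k < K, c ≤ u k - u (k + 1)) : K * c ≤ u 0 - u K := by
  induction K with
  | zero => simp
  | succ K ih =>
    have := ih fun k hk => h k (by omega)
    have := h K (by omega)
    push_cast
    linarith

theorem regularized_newton_complexity_general {n : ℕ}
    (f : EuclideanSpace ℝ (Fin n) → ℝ) (hf : ContDiff ℝ 1 f)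
    (hbdd : BddBelow (Set.range f))
    (g : EuclideanSpace ℝ (Fin n) → EuclideanSpace ℝ (Fin n))
    (H : EuclideanSpace ℝ (Fin n) → EuclideanSpace ℝ (Fin n) →L[ℝ] EuclideanSpace ℝ (Fin n))
    (hgdiff : ∀ x, HasFDerivAt g (H x) x)
    (L_H : ℝ) (hLH : 0 < L_H)
    (hLip : ∀ x y, ‖H x - H y‖ ≤ L_H * ‖x - y‖)
    (ν : EuclideanSpace ℝ (Fin n) → ℝ)
    (Ltil : ℝ) (hLtil : 0 < Ltil) (hνlb : ∀ z, Ltil ≤ ν z)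
    (hgrad : ∀ z, gradient f z = ν z • g z)
    (σ : ℝ) (hσ : L_H ≤ σ)
    (xs ss : ℕ → EuclideanSpace ℝ (Fin n))
    (hstep : ∀ k, H (xs k) (ss k) + (σ * ‖ss k‖) • ss k = -g (xs k))
    (hdescent : ∀ k, (inner ℝ (g (xs k)) (ss k) : ℝ) ≤ 0)
    (hiter : ∀ k, xs (k + 1) = xs k + ss k) :
    ∀ ε : ℝ, 0 < ε → ∀ K : ℕ, (∀ k : ℕ, 1 ≤ k → k ≤ K → ε < ‖g (xs k)‖) →
      (K : ℝ) ≤ 6 * σ ^ ((3 : ℝ) / 2) * (f (xs 0) - ⨅ x, f x) /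
        (Ltil * L_H * ε ^ ((3 : ℝ) / 2)) := by
  intro ε hε K hK
  have hσ0 : 0 < σ := hLH.trans_le hσ
  have hfgrad : ∀ z, HasGradientAt f (ν z • g z) z := fun z =>
    hgrad z ▸ (hf.differentiable one_ne_zero z).hasGradientAt
  have hdecrease : ∀ k < K,
      Ltil * L_H * ε ^ ((3 : ℝ) / 2) / (6 * σ ^ ((3 : ℝ) / 2)) ≤ f (xs k) - f (xs (k + 1)) := by
    intro k hk
    have hgap : ε ≤ 3 / 2 * σ * ‖ss k‖ ^ 2 := (hK (k + 1) (by omega) (by omega)).le.trans <|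
      hiter k ▸ norm_apply_add_le_of_newton_step hgdiff hLip hLH.le hσ (hstep k)
    calc _ = Ltil * (L_H * ε ^ ((3 : ℝ) / 2) / (6 * σ ^ ((3 : ℝ) / 2))) := by ring
      _ ≤ Ltil * (σ / 3 * ‖ss k‖ ^ 3) := by
          gcongr; exact mul_rpow_three_halves_div_le hσ0 hσ hε.le (norm_nonneg _) hgap
      _ = Ltil * σ / 3 * ‖ss k‖ ^ 3 := by ring
      _ ≤ f (xs k) - f (xs (k + 1)) := hiter k ▸ le_sub_apply_add_of_newton_step hfgrad hνlb
          hLtil.le hgdiff hLip hLH.le hσ (hstep k) (hdescent k)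
  have htotal := natCast_mul_le_sub_of_le_sub_succ hdecrease
  have hinf : ⨅ x, f x ≤ f (xs K) := ciInf_le hbdd _
  rw [le_div_iff₀ (by positivity)]
  have hpos : 0 < 6 * σ ^ ((3 : ℝ) / 2) := by positivity
  rw [mul_div_assoc', div_le_iff₀ hpos] at htotal
  linarith [mul_le_mul_of_nonneg_left hinf hpos.le]

/-- Iteration complexity of the regularized preconditioned Newton method: under
`L_H`-Lipschitz continuity of the Jacobian `H` of `g`, with `∇f = ν · g`,
`ν ≥ L̃ > 0`, `σ ≥ L_H`, and iterates `x^{k+1} = x^k + s^k` where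
`H(x^k) s^k + σ‖s^k‖ s^k = −g(x^k)` and `⟨g(x^k), s^k⟩ ≤ 0`: if `‖g(x^k)‖ > ε` for
all `1 ≤ k ≤ K`, then `K ≤ 6 σ^{3/2} (f(x⁰) − inf f) / (L̃ L_H ε^{3/2})`. -/
theorem regularized_newton_complexity {n : ℕ}
    (f : EuclideanSpace ℝ (Fin n) → ℝ) (hf : ContDiff ℝ 1 f)
    (hbdd : BddBelow (Set.range f))
    (g : EuclideanSpace ℝ (Fin n) → EuclideanSpace ℝ (Fin n))
    (H : EuclideanSpace ℝ (Fin n) → EuclideanSpace ℝ (Fin n) →L[ℝ] EuclideanSpace ℝ (Fin n))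
    (hgdiff : ∀ x, HasFDerivAt g (H x) x) (hHcont : Continuous H)
    (L_H : ℝ) (hLH : 0 < L_H)
    (hLip : ∀ x y, ‖H x - H y‖ ≤ L_H * ‖x - y‖)
    (ν : EuclideanSpace ℝ (Fin n) → ℝ) (hν : Continuous ν)
    (Ltil : ℝ) (hLtil : 0 < Ltil) (hνlb : ∀ z, Ltil ≤ ν z)
    (hgrad : ∀ z, gradient f z = ν z • g z)
    (σ : ℝ) (hσ : L_H ≤ σ)
    (xs ss : ℕ → EuclideanSpace ℝ (Fin n))
    (hstep : ∀ k, H (xs k) (ss k) + (σ * ‖ss k‖) • ss k = -g (xs k))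
    (hdescent : ∀ k, (inner ℝ (g (xs k)) (ss k) : ℝ) ≤ 0)
    (hiter : ∀ k, xs (k + 1) = xs k + ss k) :
    ∀ ε : ℝ, 0 < ε → ∀ K : ℕ, (∀ k : ℕ, 1 ≤ k → k ≤ K → ε < ‖g (xs k)‖) →
      (K : ℝ) ≤ 6 * σ ^ ((3 : ℝ) / 2) * (f (xs 0) - ⨅ x, f x) /
        (Ltil * L_H * ε ^ ((3 : ℝ) / 2)) :=
  regularized_newton_complexity_general f hf hbdd g H hgdiff L_H hLH hLip ν Ltil hLtil hνlb hgrad σ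
    hσ xs ss hstep hdescent hiter
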